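/- arXiv:0708.0983 — 2 statements merged into one kernel-verified Lean document; each statement's English description precedes it below -/
import Mathlib

section
/- Vanishing first kernel moment (constant A₂ of order h^{d+2}): as h → 0⁺, the ℝ^D-valued integral h^{-(d+1)} ∫_{B̄(0,r)} K((φ(z) − x)/h) (φ(z) − x) f(z) dz converges to 0; equivalently, ∫_{B̄(0,r)} K((φ(z) − x)/h)(φ(z) − x) f(z) dz = O(h^{d+2}). -/
/-!
Substituting `z = h • w` turns `h^{-(d+1)} ∫ K((φ z − φ 0)/h) (φ z − φ 0) f z dz` into
`∫ K(u_h w) f(h • w) u_h w dw` with `u_h w = h⁻¹ • (φ (h • w) − φ 0) → Dφ(0) w`. The lower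
Lipschitz bound confines the integrand to a fixed ball on which it is uniformly bounded, so by
dominated convergence the limit is `f 0 ∫ K(Dφ(0) w) Dφ(0) w dw`, whose integrand is odd because
`K` is radial; hence it vanishes.
-/

open MeasureTheory Metric Filter Topology Module

theorem integral_eq_zero_of_odd {E F : Type*} [AddGroup E] [MeasurableSpace E] [MeasurableNeg E]
    [NormedAddCommGroup F] [NormedSpace ℝ F] (μ : Measure E) [μ.IsNegInvariant] {g : E → F}
    (hg : g.Odd) : ∫ w, g w ∂μ = 0 := by
  have h : ∫ w, g w ∂μ = -∫ w, g w ∂μ := calc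
    ∫ w, g w ∂μ = ∫ w, g (-w) ∂μ := (integral_neg_eq_self g μ).symm
    _ = ∫ w, -g w ∂μ := by simp only [hg _]
    _ = -∫ w, g w ∂μ := integral_neg g
  have h2 : (2 : ℝ) • ∫ w, g w ∂μ = 0 := by
    rw [two_smul]
    nth_rw 1 [h]
    exact neg_add_cancel _
  exact (smul_eq_zero.mp h2).resolve_left two_ne_zero

variable {E F : Type*} [NormedAddCommGroup E] [NormedSpace ℝ E]
  [NormedAddCommGroup F] [NormedSpace ℝ F]

theorem HasFDerivAt.tendsto_inv_smul_sub {φ : E → F} {L : E →L[ℝ] F} {x : E}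
    (hφ : HasFDerivAt φ L x) (w : E) :
    Tendsto (fun h : ℝ => h⁻¹ • (φ (x + h • w) - φ x)) (𝓝[≠] 0) (𝓝 (L w)) := by
  simpa using hφ.lim w tendsto_norm_inv_nhdsNE_zero_atTop

theorem integral_inv_smul_comp_smul [MeasurableSpace E] [BorelSpace E] [FiniteDimensional ℝ E]
    (μ : Measure E) [μ.IsAddHaarMeasure] (g : E → F) {h : ℝ} (hh : 0 < h) :
    ∫ w, h⁻¹ • g (h • w) ∂μ = (h ^ (finrank ℝ E + 1))⁻¹ • ∫ z, g z ∂μ := by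
  rw [integral_smul, Measure.integral_comp_smul_of_nonneg μ g h (hR := hh.le), smul_smul, pow_succ,
    mul_inv, mul_comm]

theorem norm_kernel_rescaled_le_indicator {φ : E → F} {K : F → ℝ} {f : E → ℝ}
    {r c R A M h : ℝ} (hc : 0 < c) (hR : 0 ≤ R) (hh : 0 < h)
    (hφ : ∀ z ∈ closedBall (0 : E) r, c * ‖z‖ ≤ ‖φ z - φ 0‖)
    (hf_supp : ∀ z ∉ closedBall (0 : E) r, f z = 0) (hM : ∀ z, ‖f z‖ ≤ M)
    (hK_supp : ∀ u, K u ≠ 0 → ‖u‖ ≤ R) (hA : ∀ u, ‖K u‖ ≤ A) (w : E) :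
    ‖(K (h⁻¹ • (φ (h • w) - φ 0)) * f (h • w)) • h⁻¹ • (φ (h • w) - φ 0)‖
      ≤ (closedBall (0 : E) (R / c)).indicator (fun _ => A * M * R) w := by
  set u := h⁻¹ • (φ (h • w) - φ 0) with hu
  have hA0 : 0 ≤ A := (norm_nonneg _).trans (hA 0)
  have hM0 : 0 ≤ M := (norm_nonneg _).trans (hM 0)
  by_cases hKf : K u * f (h • w) = 0
  · rw [hKf, zero_smul, norm_zero]
    exact Set.indicator_nonneg (fun _ _ => by positivity) w
  obtain ⟨hKu, hfw⟩ := mul_ne_zero_iff.mp hKf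
  have hu_le : ‖u‖ ≤ R := hK_supp u hKu
  have hw_le : ‖w‖ ≤ R / c := by
    have hlow := hφ (h • w) (by_contra fun hz => hfw (hf_supp _ hz))
    have hφu : ‖φ (h • w) - φ 0‖ = h * ‖u‖ := by
      rw [hu, norm_smul, Real.norm_of_nonneg (inv_nonneg.mpr hh.le), mul_inv_cancel_left₀ hh.ne']
    rw [norm_smul, Real.norm_of_nonneg hh.le, hφu] at hlow
    rw [le_div_iff₀ hc]
    nlinarith
  rw [Set.indicator_of_mem (mem_closedBall_zero_iff.mpr hw_le), norm_smul, norm_mul]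
  gcongr
  exacts [hA _, hM _]

theorem tendsto_kernel_rescaled {φ : E → F} {K : F → ℝ} {f : E → ℝ}
    (hφ0 : DifferentiableAt ℝ φ 0) (hf : ContinuousAt f 0) (hK : Continuous K) (w : E) :
    Tendsto (fun h : ℝ => (K (h⁻¹ • (φ (h • w) - φ 0)) * f (h • w)) • h⁻¹ • (φ (h • w) - φ 0))
      (𝓝[>] 0) (𝓝 ((K (fderiv ℝ φ 0 w) * f 0) • fderiv ℝ φ 0 w)) := by
  have hu : Tendsto (fun h : ℝ => h⁻¹ • (φ (h • w) - φ 0)) (𝓝[>] 0) (𝓝 (fderiv ℝ φ 0 w)) := by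
    simpa using (hφ0.hasFDerivAt.tendsto_inv_smul_sub w).mono_left (nhdsGT_le_nhdsNE 0)
  have hsw : Tendsto (fun h : ℝ => h • w) (𝓝[>] 0) (𝓝 0) :=
    ((continuous_id.smul continuous_const).tendsto' (0 : ℝ) (0 : E) (zero_smul ℝ w)).mono_left
      nhdsWithin_le_nhds
  exact (((hK.tendsto _).comp hu).mul (hf.tendsto.comp hsw)).smul hu

theorem tendsto_inv_pow_smul_integral_kernel_smul_sub [MeasurableSpace E] [BorelSpace E]
    [FiniteDimensional ℝ E] (μ : Measure E) [μ.IsAddHaarMeasure] {φ : E → F} {K : F → ℝ} {f : E → ℝ}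
    {r c : ℝ} (hc : 0 < c) (hφ : Continuous φ) (hφ0 : DifferentiableAt ℝ φ 0)
    (hφ_low : ∀ z ∈ closedBall (0 : E) r, c * ‖z‖ ≤ ‖φ z - φ 0‖)
    (hf : Continuous f) (hf_supp : ∀ z ∉ closedBall (0 : E) r, f z = 0)
    (hK : Continuous K) (hK_supp : HasCompactSupport K) (hK_even : K.Even) :
    Tendsto (fun h : ℝ => (h ^ (finrank ℝ E + 1))⁻¹ •
        ∫ z in closedBall (0 : E) r, (K (h⁻¹ • (φ z - φ 0)) * f z) • (φ z - φ 0) ∂μ)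
      (𝓝[>] 0) (𝓝 0) := by
  set L := fderiv ℝ φ 0
  obtain ⟨R, hR, hKR⟩ := hK_supp.isCompact.isBounded.subset_closedBall_lt 0 0
  obtain ⟨A, hA⟩ := hK.bounded_above_of_compact_support hK_supp
  obtain ⟨M, hM⟩ := hf.bounded_above_of_compact_support
    (HasCompactSupport.intro (isCompact_closedBall 0 r) hf_supp)
  have h_odd : ∫ w, (K (L w) * f 0) • L w ∂μ = 0 :=
    integral_eq_zero_of_odd μ fun w => by simp [hK_even (L w)]
  have h_dom := tendsto_integral_filter_of_dominated_convergence (μ := μ) (l := 𝓝[>] (0 : ℝ))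
    ((closedBall (0 : E) (R / c)).indicator fun _ => A * M * R)
    (Eventually.of_forall fun h => by fun_prop)
    (eventually_mem_nhdsWithin.mono fun h hh => Eventually.of_forall
      (norm_kernel_rescaled_le_indicator hc hR.le hh hφ_low hf_supp hM
        (fun u hu => mem_closedBall_zero_iff.mp (hKR (subset_tsupport K hu))) hA))
    ((integrable_indicator_iff measurableSet_closedBall).mpr
      (integrableOn_const measure_closedBall_lt_top.ne))
    (Eventually.of_forall (tendsto_kernel_rescaled hφ0 hf.continuousAt hK))
  rw [h_odd] at h_dom
  refine h_dom.congr' (eventually_mem_nhdsWithin.mono fun h (hh : 0 < h) => ?_)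
  dsimp only
  rw [setIntegral_eq_integral_of_forall_compl_eq_zero fun z hz => by simp [hf_supp z hz],
    ← integral_inv_smul_comp_smul μ _ hh]
  simp_rw [smul_comm h⁻¹ (K _ * f _)]

theorem kernel_first_moment_vanishes_general
    (d D : ℕ) (r : ℝ)
    (φ : EuclideanSpace ℝ (Fin d) → EuclideanSpace ℝ (Fin D))
    (hφ : ContDiff ℝ 2 φ)
    (c C : ℝ) (hc : 0 < c)
    (hbil : ∀ z ∈ closedBall (0 : EuclideanSpace ℝ (Fin d)) r,
      ∀ z' ∈ closedBall (0 : EuclideanSpace ℝ (Fin d)) r,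
        c * ‖z - z'‖ ≤ ‖φ z - φ z'‖ ∧ ‖φ z - φ z'‖ ≤ C * ‖z - z'‖)
    (f : EuclideanSpace ℝ (Fin d) → ℝ)
    (hf_smooth : ContDiff ℝ 1 f)
    (hf_supp : ∀ z ∉ closedBall (0 : EuclideanSpace ℝ (Fin d)) r, f z = 0)
    (K : EuclideanSpace ℝ (Fin D) → ℝ)
    (hK_cont : Continuous K)
    (hK_supp : HasCompactSupport K)
    (hK_radial : ∀ u v, ‖u‖ = ‖v‖ → K u = K v) :
    Tendsto
      (fun h : ℝ =>
        (h ^ (d + 1))⁻¹ •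
          ∫ z in closedBall (0 : EuclideanSpace ℝ (Fin d)) r,
            (K (h⁻¹ • (φ z - φ 0)) * f z) • (φ z - φ 0))
      (nhdsWithin 0 (Set.Ioi 0))
      (nhds (0 : EuclideanSpace ℝ (Fin D))) := by
  have hφ_low : ∀ z ∈ closedBall (0 : EuclideanSpace ℝ (Fin d)) r, c * ‖z‖ ≤ ‖φ z - φ 0‖ :=
    fun z hz => by
      simpa using (hbil z hz 0 (mem_closedBall_self (dist_nonneg.trans hz))).1
  simpa [finrank_euclideanSpace_fin] using
    tendsto_inv_pow_smul_integral_kernel_smul_sub volume hc hφ.continuous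
      (hφ.differentiable (by norm_num) 0) hφ_low hf_smooth.continuous hf_supp hK_cont hK_supp
      fun u => hK_radial _ _ (norm_neg u)

/-- Vanishing first kernel moment (constant A₂ of order `h^(d+2)`): as `h → 0⁺`,
`h^(-(d+1)) ∫_{B̄(0,r)} K((φ z − x)/h) (φ z − x) f z dz → 0` in `ℝ^D`. -/
theorem kernel_first_moment_vanishes
    (d D : ℕ) (hd : 0 < d) (hdD : d ≤ D) (r : ℝ) (hr : 0 < r)
    (φ : EuclideanSpace ℝ (Fin d) → EuclideanSpace ℝ (Fin D))
    (hφ : ContDiff ℝ 2 φ)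
    (c C : ℝ) (hc : 0 < c) (hcC : c ≤ C)
    (hbil : ∀ z ∈ closedBall (0 : EuclideanSpace ℝ (Fin d)) r,
      ∀ z' ∈ closedBall (0 : EuclideanSpace ℝ (Fin d)) r,
        c * ‖z - z'‖ ≤ ‖φ z - φ z'‖ ∧ ‖φ z - φ z'‖ ≤ C * ‖z - z'‖)
    (hL : Function.Injective (fderiv ℝ φ 0))
    (f : EuclideanSpace ℝ (Fin d) → ℝ)
    (hf_smooth : ContDiff ℝ 1 f)
    (hf_nonneg : ∀ z, 0 ≤ f z)
    (hf_supp : ∀ z ∉ closedBall (0 : EuclideanSpace ℝ (Fin d)) r, f z = 0)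
    (hf_bdd : ∃ M : ℝ, ∀ z, f z ≤ M)
    (hf_prob : ∫ z, f z = 1)
    (hf_pos : 0 < f 0)
    (K : EuclideanSpace ℝ (Fin D) → ℝ)
    (hK_nonneg : ∀ u, 0 ≤ K u) (hK_cont : Continuous K)
    (hK_supp : HasCompactSupport K)
    (hK_radial : ∀ u v, ‖u‖ = ‖v‖ → K u = K v) :
    Tendsto
      (fun h : ℝ =>
        (h ^ (d + 1))⁻¹ •
          ∫ z in closedBall (0 : EuclideanSpace ℝ (Fin d)) r,
            (K (h⁻¹ • (φ z - φ 0)) * f z) • (φ z - φ 0))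
      (nhdsWithin 0 (Set.Ioi 0))
      (nhds (0 : EuclideanSpace ℝ (Fin D))) :=
  kernel_first_moment_vanishes_general d D r φ hφ c C hc hbil f hf_smooth hf_supp K hK_cont hK_supp
    hK_radial
end

section
/- Law of large numbers for the second kernel moment (lower-right Gram block): the D×D-matrix-valued random variable (n h_n^{d+2})^{-1} Σ_{i=1}^n K((X_i − x)/h_n) (X_i − x)(X_i − x)^T converges entrywise in probability to f(0) · ∫_{ℝ^d} K(L u) (L u)(L u)^T du as n → ∞. -/
/-!
With `Q y = K y * (y a * y b)` the summand is `h² Q (h⁻¹ (X_i - x))`, so the claim is a law of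
large numbers for the continuous, compactly supported kernel `Q`. Substituting `z = h u`,
`h⁻ᵈ 𝔼 Q (h⁻¹ (X - x)) = ∫ f (h u) Q (h⁻¹ (φ (h u) - φ 0)) du`, which tends to `f 0 ∫ Q (L u) du`
by dominated convergence: the lower bi-Lipschitz bound keeps the integrand inside a fixed ball.
The same limit for `Q²` bounds the second moment by `O(hᵈ)`, so the variance of the average is
`O((n hᵈ)⁻¹) → 0`, and Chebyshev's inequality concludes.
-/

open MeasureTheory Metric Filter Topology Module

namespace ProbabilityTheory

variable {Ω : Type*} [MeasurableSpace Ω] {μ : Measure Ω}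

theorem tendstoInMeasure_const_of_tendsto_variance [IsFiniteMeasure μ] {ι : Type*}
    {l : Filter ι} {Y : ι → Ω → ℝ} {m : ℝ} (hY : ∀ i, MemLp (Y i) 2 μ)
    (hmean : Tendsto (fun i => ∫ ω, Y i ω ∂μ) l (𝓝 m))
    (hvar : Tendsto (fun i => Var[Y i; μ]) l (𝓝 0)) :
    TendstoInMeasure μ Y l fun _ => m := by
  rw [tendstoInMeasure_iff_dist]
  intro ε hε
  have hchebyshev : ∀ᶠ i in l,
      μ {ω | ε ≤ dist (Y i ω) m} ≤ ENNReal.ofReal (Var[Y i; μ] / (ε / 2) ^ 2) := by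
    filter_upwards [hmean.eventually (ball_mem_nhds m (half_pos hε))] with i hi
    refine (measure_mono fun ω hω => ?_).trans (meas_ge_le_variance_div_sq (hY i) (half_pos hε))
    simp only [Set.mem_ofPred_eq, Real.dist_eq] at hω hi ⊢
    linarith [abs_sub_le (Y i ω) (∫ ω, Y i ω ∂μ) m]
  have hbound : Tendsto (fun i => ENNReal.ofReal (Var[Y i; μ] / (ε / 2) ^ 2)) l (𝓝 0) := by
    simpa using ENNReal.tendsto_ofReal (hvar.div_const ((ε / 2) ^ 2))
  exact tendsto_of_tendsto_of_tendsto_of_le_of_le' tendsto_const_nhds hbound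
    (Eventually.of_forall fun _ => zero_le) hchebyshev

theorem variance_sum_comp_of_identDistrib {F ι : Type*} [MeasurableSpace F] {X : ι → Ω → F}
    (hX_indep : iIndepFun X μ) {i₀ : ι} (hident : ∀ i, IdentDistrib (X i) (X i₀) μ μ)
    {G : F → ℝ} (hG : Measurable G) (hmem : MemLp (fun ω => G (X i₀ ω)) 2 μ) (s : Finset ι) :
    Var[fun ω => ∑ i ∈ s, G (X i ω); μ] = s.card * Var[fun ω => G (X i₀ ω); μ] := by
  have hident_comp : ∀ i, IdentDistrib (fun ω => G (X i ω)) (fun ω => G (X i₀ ω)) μ μ :=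
    fun i => (hident i).comp hG
  have hsum : (fun ω => ∑ i ∈ s, G (X i ω)) = ∑ i ∈ s, fun ω => G (X i ω) := by
    ext ω; simp
  rw [hsum, IndepFun.variance_sum (fun i _ => (hident_comp i).memLp_iff.2 hmem)
    fun i _ j _ hij => (hX_indep.indepFun hij).comp hG hG]
  simp [fun i => (hident_comp i).variance_eq]

theorem tendstoInMeasure_sum_div_of_identDistrib [IsProbabilityMeasure μ] {F : Type*}
    [MeasurableSpace F] {X : ℕ → Ω → F} (hX_indep : iIndepFun X μ)
    (hident : ∀ i, IdentDistrib (X i) (X 0) μ μ) {G : ℕ → F → ℝ}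
    (hG_meas : ∀ n, Measurable (G n)) (hG_bdd : ∀ n, ∃ C, ∀ y, |G n y| ≤ C)
    {b : ℕ → ℝ} {m m₂ : ℝ} (hnb : Tendsto (fun n => n * b n) atTop atTop)
    (hmean : Tendsto (fun n => (∫ ω, G n (X 0 ω) ∂μ) / b n) atTop (𝓝 m))
    (hsq : Tendsto (fun n => (∫ ω, G n (X 0 ω) ^ 2 ∂μ) / b n) atTop (𝓝 m₂)) :
    TendstoInMeasure μ (fun n ω => (∑ i ∈ Finset.range n, G n (X i ω)) / (n * b n)) atTop
      fun _ => m := by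
  have hmem : ∀ n i, MemLp (fun ω => G n (X i ω)) 2 μ := fun n i => by
    obtain ⟨C, hC⟩ := hG_bdd n
    exact MemLp.of_bound
      ((hG_meas n).comp_aemeasurable (hident i).aemeasurable_fst).aestronglyMeasurable C
      (ae_of_all _ fun ω => hC _)
  refine tendstoInMeasure_const_of_tendsto_variance (fun n => ?_) ?_ ?_
  · simp_rw [div_eq_mul_inv]
    exact (memLp_finsetSum _ fun i _ => hmem n i).mul_const _
  · refine hmean.congr' ?_
    filter_upwards [eventually_ne_atTop 0] with n hn
    have hsame : ∀ i, ∫ ω, G n (X i ω) ∂μ = ∫ ω, G n (X 0 ω) ∂μ :=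
      fun i => ((hident i).comp (hG_meas n)).integral_eq
    rw [integral_div, integral_finsetSum _ fun i _ => (hmem n i).integrable one_le_two]
    simp only [hsame, Finset.sum_const, Finset.card_range, nsmul_eq_mul]
    rw [mul_div_mul_left _ _ (Nat.cast_ne_zero.2 hn)]
  · have hupper : ∀ᶠ n in atTop, Var[fun ω => (∑ i ∈ Finset.range n, G n (X i ω)) / (n * b n); μ]
        ≤ (n * b n)⁻¹ * ((∫ ω, G n (X 0 ω) ^ 2 ∂μ) / b n) := by
      filter_upwards [eventually_ne_atTop 0] with n hn
      simp_rw [div_eq_inv_mul _ ((n : ℝ) * b n)]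
      rw [variance_const_mul, variance_sum_comp_of_identDistrib hX_indep hident (hG_meas n)
        (hmem n 0), Finset.card_range]
      calc ((n : ℝ) * b n)⁻¹ ^ 2 * (n * Var[fun ω => G n (X 0 ω); μ])
          ≤ ((n : ℝ) * b n)⁻¹ ^ 2 * (n * ∫ ω, G n (X 0 ω) ^ 2 ∂μ) := by
            gcongr
            exact variance_le_expectation_sq (hmem n 0).aestronglyMeasurable
        _ = (n * b n)⁻¹ * ((∫ ω, G n (X 0 ω) ^ 2 ∂μ) / b n) := by
            field_simp
    have hlim := hnb.inv_tendsto_atTop.mul hsq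
    rw [zero_mul] at hlim
    exact tendsto_of_tendsto_of_tendsto_of_le_of_le' tendsto_const_nhds hlim
      (Eventually.of_forall fun n => variance_nonneg _ _) hupper

end ProbabilityTheory

theorem integral_map_withDensity_ofReal {α β : Type*} [MeasurableSpace α] [MeasurableSpace β]
    {μ : Measure α} {f : α → ℝ} (hf : Measurable f) (hf_nonneg : ∀ x, 0 ≤ f x) {φ : α → β}
    (hφ : Measurable φ) {G : β → ℝ} (hG : Measurable G) :
    ∫ y, G y ∂(μ.withDensity fun x => ENNReal.ofReal (f x)).map φ = ∫ x, f x * G (φ x) ∂μ := by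
  rw [integral_map hφ.aemeasurable hG.aestronglyMeasurable,
    integral_withDensity_eq_integral_toReal_smul hf.ennreal_ofReal
      (ae_of_all _ fun _ => ENNReal.ofReal_lt_top)]
  simp only [ENNReal.toReal_ofReal (hf_nonneg _), smul_eq_mul]

section KernelIntegral

variable {E F : Type*} [NormedAddCommGroup E] [NormedSpace ℝ E] [NormedAddCommGroup F]
  [NormedSpace ℝ F]

theorem norm_le_mul_of_apply_inv_smul_ne_zero {Q : F → ℝ} {R t : ℝ}
    (hQR : ∀ y, Q y ≠ 0 → ‖y‖ ≤ R) (ht : 0 < t) {v : F} (hv : Q (t⁻¹ • v) ≠ 0) :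
    ‖v‖ ≤ R * t := by
  have := hQR _ hv
  rw [norm_smul, Real.norm_of_nonneg (inv_nonneg.2 ht.le), inv_mul_le_iff₀ ht] at this
  linarith

theorem norm_le_div_of_rescaled_ne_zero {f : E → ℝ} {φ : E → F} {Q : F → ℝ} {R c t : ℝ}
    (hc : 0 < c) (hloc : ∀ z, f z ≠ 0 → c * ‖z‖ ≤ ‖φ z - φ 0‖)
    (hQR : ∀ y, Q y ≠ 0 → ‖y‖ ≤ R) (ht : 0 < t) {u : E} (hf : f (t • u) ≠ 0)
    (hQ : Q (t⁻¹ • (φ (t • u) - φ 0)) ≠ 0) : ‖u‖ ≤ R / c := by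
  have hφ := (hloc _ hf).trans (norm_le_mul_of_apply_inv_smul_ne_zero hQR ht hQ)
  rw [norm_smul, Real.norm_of_nonneg ht.le] at hφ
  rw [le_div_iff₀ hc]
  nlinarith

variable [MeasurableSpace E] [BorelSpace E]

theorem tendsto_integral_rescaled_kernel [ProperSpace E] (μ : Measure E)
    [IsFiniteMeasureOnCompacts μ] {f : E → ℝ} {φ : E → F} {L : E →L[ℝ] F} {Q : F → ℝ}
    {M c : ℝ} (hf_meas : Measurable f) (hf_bdd : ∀ z, |f z| ≤ M) (hf_cont : ContinuousAt f 0)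
    (hφ_cont : Continuous φ) (hφ : HasFDerivAt φ L 0) (hc : 0 < c)
    (hloc : ∀ z, f z ≠ 0 → c * ‖z‖ ≤ ‖φ z - φ 0‖) (hQ : Continuous Q)
    (hQ_supp : HasCompactSupport Q) :
    Tendsto (fun t : ℝ => ∫ u, f (t • u) * Q (t⁻¹ • (φ (t • u) - φ 0)) ∂μ) (𝓝[>] 0)
      (𝓝 (f 0 * ∫ u, Q (L u) ∂μ)) := by
  obtain ⟨MQ, hMQ⟩ := hQ_supp.exists_bound_of_continuous hQ
  have hM : 0 ≤ M := (abs_nonneg _).trans (hf_bdd 0)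
  have hMQ₀ : 0 ≤ MQ := (norm_nonneg _).trans (hMQ 0)
  obtain ⟨R, hR⟩ := hQ_supp.isBounded.subset_closedBall 0
  have hQR : ∀ y, Q y ≠ 0 → ‖y‖ ≤ R := fun y hy =>
    mem_closedBall_zero_iff.1 (hR (subset_tsupport Q hy))
  rw [← integral_const_mul]
  refine tendsto_integral_filter_of_dominated_convergence
    ((closedBall 0 (R / c)).indicator fun _ => M * MQ) ?_ ?_ ?_ ?_
  · refine Eventually.of_forall fun t => Measurable.aestronglyMeasurable ?_
    exact (hf_meas.comp (measurable_const_smul t)).mul (by fun_prop : Continuous _).measurable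
  · filter_upwards [self_mem_nhdsWithin] with t (ht : 0 < t)
    refine ae_of_all _ fun u => ?_
    by_cases hfQ : f (t • u) * Q (t⁻¹ • (φ (t • u) - φ 0)) = 0
    · rw [hfQ, norm_zero]
      exact Set.indicator_nonneg (fun _ _ => mul_nonneg hM hMQ₀) _
    · obtain ⟨hf, hQ⟩ := mul_ne_zero_iff.1 hfQ
      rw [Set.indicator_of_mem
        (mem_closedBall_zero_iff.2 (norm_le_div_of_rescaled_ne_zero hc hloc hQR ht hf hQ)),
        norm_mul]
      exact mul_le_mul (hf_bdd _) (hMQ _) (norm_nonneg _) hM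
  · exact (integrable_indicator_iff measurableSet_closedBall).2
      (integrableOn_const measure_closedBall_lt_top.ne)
  · refine ae_of_all _ fun u => ?_
    have hsmul : Tendsto (fun t : ℝ => t • u) (𝓝[>] 0) (𝓝 0) := by
      simpa using (tendsto_id.smul_const u).mono_left (nhdsWithin_le_nhds (a := (0 : ℝ)))
    have hslope : Tendsto (fun t : ℝ => t⁻¹ • (φ (t • u) - φ 0)) (𝓝[>] 0) (𝓝 (L u)) := by
      simpa using (hφ.hasLineDerivAt u).tendsto_slope_zero_right
    exact (hf_cont.tendsto.comp hsmul).mul ((hQ.tendsto _).comp hslope)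

theorem tendsto_integral_kernel_div_pow [FiniteDimensional ℝ E] (μ : Measure E)
    [μ.IsAddHaarMeasure] {f : E → ℝ} {φ : E → F} {L : E →L[ℝ] F} {Q : F → ℝ}
    {M c : ℝ} (hf_meas : Measurable f) (hf_bdd : ∀ z, |f z| ≤ M) (hf_cont : ContinuousAt f 0)
    (hφ_cont : Continuous φ) (hφ : HasFDerivAt φ L 0) (hc : 0 < c)
    (hloc : ∀ z, f z ≠ 0 → c * ‖z‖ ≤ ‖φ z - φ 0‖) (hQ : Continuous Q)
    (hQ_supp : HasCompactSupport Q) :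
    Tendsto (fun t : ℝ => (∫ z, f z * Q (t⁻¹ • (φ z - φ 0)) ∂μ) / t ^ finrank ℝ E) (𝓝[>] 0)
      (𝓝 (f 0 * ∫ u, Q (L u) ∂μ)) := by
  refine (tendsto_integral_rescaled_kernel μ hf_meas hf_bdd hf_cont hφ_cont hφ hc hloc hQ
    hQ_supp).congr' ?_
  filter_upwards [self_mem_nhdsWithin] with t (ht : 0 < t)
  rw [Measure.integral_comp_smul_of_nonneg μ (fun z => f z * Q (t⁻¹ • (φ z - φ 0))) t
    (hR := ht.le), smul_eq_mul, inv_mul_eq_div]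

end KernelIntegral

section KernelAverage

variable {E F Ω : Type*} [NormedAddCommGroup E] [NormedSpace ℝ E] [MeasurableSpace E]
  [BorelSpace E] [FiniteDimensional ℝ E] [NormedAddCommGroup F] [NormedSpace ℝ F]
  [MeasurableSpace F] [BorelSpace F] [MeasurableSpace Ω]

theorem tendstoInMeasure_kernel_average (μ : Measure E) [μ.IsAddHaarMeasure]
    (ℙ : Measure Ω) [IsProbabilityMeasure ℙ] {f : E → ℝ} {φ : E → F} {L : E →L[ℝ] F}
    {Q : F → ℝ} {M c : ℝ} {X : ℕ → Ω → F} {h : ℕ → ℝ}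
    (hf_meas : Measurable f) (hf_nonneg : ∀ z, 0 ≤ f z) (hf_bdd : ∀ z, f z ≤ M)
    (hf_cont : ContinuousAt f 0) (hφ_cont : Continuous φ) (hφ : HasFDerivAt φ L 0) (hc : 0 < c)
    (hloc : ∀ z, f z ≠ 0 → c * ‖z‖ ≤ ‖φ z - φ 0‖) (hQ : Continuous Q)
    (hQ_supp : HasCompactSupport Q) (hX_meas : ∀ i, Measurable (X i))
    (hX_indep : ProbabilityTheory.iIndepFun X ℙ)
    (hX_law : ∀ i, ℙ.map (X i) = (μ.withDensity fun z => ENNReal.ofReal (f z)).map φ)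
    (hh_pos : ∀ n, 0 < h n) (hh0 : Tendsto h atTop (𝓝 0))
    (hnh : Tendsto (fun n : ℕ => n * h n ^ finrank ℝ E) atTop atTop) :
    TendstoInMeasure ℙ
      (fun n ω => (∑ i ∈ Finset.range n, Q ((h n)⁻¹ • (X i ω - φ 0))) /
        (n * h n ^ finrank ℝ E))
      atTop fun _ => f 0 * ∫ u, Q (L u) ∂μ := by
  have hident : ∀ i, ProbabilityTheory.IdentDistrib (X i) (X 0) ℙ ℙ := fun i =>
    ⟨(hX_meas i).aemeasurable, (hX_meas 0).aemeasurable, (hX_law i).trans (hX_law 0).symm⟩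
  have hh : Tendsto h atTop (𝓝[>] 0) :=
    tendsto_nhdsWithin_iff.2 ⟨hh0, Eventually.of_forall hh_pos⟩
  have hf_abs : ∀ z, |f z| ≤ M := fun z => (abs_of_nonneg (hf_nonneg z)).trans_le (hf_bdd z)
  have hmoment : ∀ G : F → ℝ, Continuous G → HasCompactSupport G →
      Tendsto (fun n => (∫ ω, G ((h n)⁻¹ • (X 0 ω - φ 0)) ∂ℙ) / h n ^ finrank ℝ E) atTop
        (𝓝 (f 0 * ∫ u, G (L u) ∂μ)) := by
    intro G hG hG_supp
    have hexpect : ∀ t : ℝ, ∫ ω, G (t⁻¹ • (X 0 ω - φ 0)) ∂ℙ =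
        ∫ z, f z * G (t⁻¹ • (φ z - φ 0)) ∂μ := fun t => by
      have hGt : Continuous fun y => G (t⁻¹ • (y - φ 0)) := by fun_prop
      rw [← integral_map (hX_meas 0).aemeasurable hGt.aestronglyMeasurable, hX_law 0,
        integral_map_withDensity_ofReal hf_meas hf_nonneg hφ_cont.measurable hGt.measurable]
    simp_rw [hexpect]
    exact (tendsto_integral_kernel_div_pow μ hf_meas hf_abs hf_cont hφ_cont hφ hc hloc hG
      hG_supp).comp hh
  obtain ⟨MQ, hMQ⟩ := hQ_supp.exists_bound_of_continuous hQ
  exact ProbabilityTheory.tendstoInMeasure_sum_div_of_identDistrib hX_indep hident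
    (G := fun n y => Q ((h n)⁻¹ • (y - φ 0))) (fun n => by fun_prop)
    (fun n => ⟨MQ, fun y => hMQ _⟩) hnh (hmoment Q hQ hQ_supp)
    (hmoment (fun y => Q y ^ 2) (by fun_prop) (hQ_supp.comp_left (g := fun x => x ^ 2) (by simp)))

end KernelAverage

theorem lln_kernel_second_moment_general
    (d D : ℕ) (r : ℝ)
    (φ : EuclideanSpace ℝ (Fin d) → EuclideanSpace ℝ (Fin D))
    (hφ : ContDiff ℝ 1 φ)
    (c C : ℝ) (hc : 0 < c)
    (hbil : ∀ z ∈ closedBall (0 : EuclideanSpace ℝ (Fin d)) r,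
      ∀ z' ∈ closedBall (0 : EuclideanSpace ℝ (Fin d)) r,
        c * ‖z - z'‖ ≤ ‖φ z - φ z'‖ ∧ ‖φ z - φ z'‖ ≤ C * ‖z - z'‖)
    (f : EuclideanSpace ℝ (Fin d) → ℝ)
    (hf_meas : Measurable f)
    (hf_nonneg : ∀ z, 0 ≤ f z)
    (hf_supp : ∀ z ∉ closedBall (0 : EuclideanSpace ℝ (Fin d)) r, f z = 0)
    (hf_bdd : ∃ M : ℝ, ∀ z, f z ≤ M)
    (hf_cont : ContinuousAt f 0)
    (K : EuclideanSpace ℝ (Fin D) → ℝ)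
    (hK_cont : Continuous K)
    (hK_supp : HasCompactSupport K)
    (Ω : Type*) [MeasurableSpace Ω] (ℙ : Measure Ω) [IsProbabilityMeasure ℙ]
    (X : ℕ → Ω → EuclideanSpace ℝ (Fin D))
    (hX_meas : ∀ i, Measurable (X i))
    (hX_indep : ProbabilityTheory.iIndepFun X ℙ)
    (hX_law : ∀ i, Measure.map (X i) ℙ =
      Measure.map φ
        ((volume.restrict (closedBall (0 : EuclideanSpace ℝ (Fin d)) r)).withDensity
          fun z => ENNReal.ofReal (f z)))
    (h : ℕ → ℝ) (hh_pos : ∀ n, 0 < h n)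
    (hh0 : Tendsto h atTop (nhds 0))
    (hnh : Tendsto (fun n : ℕ => (n : ℝ) * h n ^ d) atTop atTop) :
    ∀ a b : Fin D,
      TendstoInMeasure ℙ
        (fun (n : ℕ) ω =>
          (∑ i ∈ Finset.range n,
              K ((h n)⁻¹ • (X i ω - φ 0)) * ((X i ω - φ 0) a * (X i ω - φ 0) b)) /
            ((n : ℝ) * h n ^ (d + 2)))
        atTop
        (fun _ => f 0 *
          ∫ u, K (fderiv ℝ φ 0 u) * (fderiv ℝ φ 0 u a * fderiv ℝ φ 0 u b)) := by
  intro a b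
  obtain ⟨M, hM⟩ := hf_bdd
  have hloc : ∀ z, f z ≠ 0 → c * ‖z‖ ≤ ‖φ z - φ 0‖ := fun z hz => by
    have hz : z ∈ closedBall 0 r := by_contra fun hz' => hz (hf_supp z hz')
    simpa using (hbil z hz 0 (mem_closedBall_self (dist_nonneg.trans hz))).1
  have hlaw : ∀ i, ℙ.map (X i) = (volume.withDensity fun z => ENNReal.ofReal (f z)).map φ := by
    intro i
    rw [hX_law i, ← withDensity_indicator measurableSet_closedBall,
      Set.indicator_eq_self.2 (Function.support_subset_iff'.2 fun z hz => by simp [hf_supp z hz])]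
  have hsummand : ∀ n (ω : Ω), (∑ i ∈ Finset.range n,
      K ((h n)⁻¹ • (X i ω - φ 0)) * ((X i ω - φ 0) a * (X i ω - φ 0) b)) / (n * h n ^ (d + 2)) =
      (∑ i ∈ Finset.range n, K ((h n)⁻¹ • (X i ω - φ 0)) *
        (((h n)⁻¹ • (X i ω - φ 0)) a * ((h n)⁻¹ • (X i ω - φ 0)) b)) /
        (n * h n ^ finrank ℝ (EuclideanSpace ℝ (Fin d))) := by
    intro n ω
    simp only [PiLp.smul_apply, smul_eq_mul, finrank_euclideanSpace_fin, Finset.sum_div]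
    refine Finset.sum_congr rfl fun i _ => ?_
    field_simp
    ring
  simp_rw [hsummand]
  refine tendstoInMeasure_kernel_average volume ℙ (Q := fun y => K y * (y a * y b)) hf_meas
    hf_nonneg hM hf_cont hφ.continuous ((hφ.differentiable one_ne_zero) 0).hasFDerivAt hc hloc
    (by fun_prop) hK_supp.mul_right hX_meas hX_indep hlaw hh_pos hh0 ?_
  rwa [finrank_euclideanSpace_fin]

/-- LLN for the second kernel moment (lower-right Gram block): entrywise,
`(n h_n^{d+2})⁻¹ Σ_{i<n} K((X_i − x)/h_n) (X_i − x)(X_i − x)ᵀ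
  → f 0 · ∫ K (L u) (L u)(L u)ᵀ du` in probability. -/
theorem lln_kernel_second_moment
    (d D : ℕ) (hd : 0 < d) (hdD : d ≤ D) (r : ℝ) (hr : 0 < r)
    (φ : EuclideanSpace ℝ (Fin d) → EuclideanSpace ℝ (Fin D))
    (hφ : ContDiff ℝ 1 φ)
    (c C : ℝ) (hc : 0 < c) (hcC : c ≤ C)
    (hbil : ∀ z ∈ closedBall (0 : EuclideanSpace ℝ (Fin d)) r,
      ∀ z' ∈ closedBall (0 : EuclideanSpace ℝ (Fin d)) r,
        c * ‖z - z'‖ ≤ ‖φ z - φ z'‖ ∧ ‖φ z - φ z'‖ ≤ C * ‖z - z'‖)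
    (hL : Function.Injective (fderiv ℝ φ 0))
    (f : EuclideanSpace ℝ (Fin d) → ℝ)
    (hf_meas : Measurable f)
    (hf_nonneg : ∀ z, 0 ≤ f z)
    (hf_supp : ∀ z ∉ closedBall (0 : EuclideanSpace ℝ (Fin d)) r, f z = 0)
    (hf_bdd : ∃ M : ℝ, ∀ z, f z ≤ M)
    (hf_prob : ∫ z, f z = 1)
    (hf_cont : ContinuousAt f 0) (hf_pos : 0 < f 0)
    (K : EuclideanSpace ℝ (Fin D) → ℝ)
    (hK_nonneg : ∀ u, 0 ≤ K u) (hK_cont : Continuous K)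
    (hK_supp : HasCompactSupport K)
    (Ω : Type*) [MeasurableSpace Ω] (ℙ : Measure Ω) [IsProbabilityMeasure ℙ]
    (X : ℕ → Ω → EuclideanSpace ℝ (Fin D))
    (hX_meas : ∀ i, Measurable (X i))
    (hX_indep : ProbabilityTheory.iIndepFun X ℙ)
    (hX_law : ∀ i, Measure.map (X i) ℙ =
      Measure.map φ
        ((volume.restrict (closedBall (0 : EuclideanSpace ℝ (Fin d)) r)).withDensity
          fun z => ENNReal.ofReal (f z)))
    (h : ℕ → ℝ) (hh_pos : ∀ n, 0 < h n)
    (hh0 : Tendsto h atTop (nhds 0))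
    (hnh : Tendsto (fun n : ℕ => (n : ℝ) * h n ^ d) atTop atTop) :
    ∀ a b : Fin D,
      TendstoInMeasure ℙ
        (fun (n : ℕ) ω =>
          (∑ i ∈ Finset.range n,
              K ((h n)⁻¹ • (X i ω - φ 0)) * ((X i ω - φ 0) a * (X i ω - φ 0) b)) /
            ((n : ℝ) * h n ^ (d + 2)))
        atTop
        (fun _ => f 0 *
          ∫ u, K (fderiv ℝ φ 0 u) * (fderiv ℝ φ 0 u a * fderiv ℝ φ 0 u b)) :=
  lln_kernel_second_moment_general d D r φ hφ c C hc hbil f hf_meas hf_nonneg hf_supp hf_bdd hf_cont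
    K hK_cont hK_supp Ω ℙ X hX_meas hX_indep hX_law h hh_pos hh0 hnh
end
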